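/- Critical-pair-closing systems for abstract rewrite systems: let a and d be binary relations on a type α such that (1) d is a subrelation of a (d x y implies a x y), and (2) d is critical-pair-closing for a: for every local peak s ←_a u →_a t, s and t are d-convertible, i.e., s ↔*_d t. If d is confluent, then a is confluent. -/

import Mathlib

/-!
Since `d` is confluent, `d`-convertible terms are `d*`-joinable, so every local `a`-peak is
`d*`-joinable. A peak `s ←_{d*} u →_a t` whose left leg is nontrivial, `u →_d z →_{d*} s`, is
then joinable too: join the local peak `z ←_a u →_a t`, then use confluence of `d` at `z`.
Hence `a ∪ d*` satisfies the hypothesis of `Relation.church_rosser`, and its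
reflexive–transitive closure is `a*` because `d ⊆ a`.
-/

/-- Conversion: reflexive–transitive closure of the symmetric closure. -/
def Conv {α : Type*} (r : α → α → Prop) : α → α → Prop :=
  Relation.ReflTransGen (fun a b => r a b ∨ r b a)

namespace Relation

variable {α : Type*}

def Confluent (r : α → α → Prop) : Prop :=
  ∀ x y z, ReflTransGen r x y → ReflTransGen r x z → Join (ReflTransGen r) y z

theorem Confluent.conv_le_join {r : α → α → Prop} (hr : Confluent r) :
    Conv r ≤ Join (ReflTransGen r) :=
  reflTransGen_le_of_equivalence_of_le (equivalence_join hr) fun x y hxy =>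
    hxy.elim (fun h => ⟨y, .single h, .refl⟩) (fun h => ⟨x, .refl, .single h⟩)

variable {a d : α → α → Prop}

theorem join_of_transGen_of_step (hsub : d ≤ a)
    (hpeak : ∀ u s t, a u s → a u t → Join (ReflTransGen d) s t) (hd : Confluent d)
    {u s t : α} (hus : TransGen d u s) (hut : a u t) : Join (ReflTransGen d) s t := by
  obtain ⟨z, huz, hzs⟩ := TransGen.head'_iff.mp hus
  obtain ⟨p, hzp, htp⟩ := hpeak u z t (hsub _ _ huz) hut
  obtain ⟨w, hsw, hpw⟩ := hd z s p hzs hzp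
  exact ⟨w, hsw, htp.trans hpw⟩

theorem confluent_of_join_peaks (hsub : d ≤ a)
    (hpeak : ∀ u s t, a u s → a u t → Join (ReflTransGen d) s t) (hd : Confluent d) :
    Confluent a := by
  let c : α → α → Prop := fun x y => a x y ∨ ReflTransGen d x y
  have of_join {s t : α} (h : Join (ReflTransGen d) s t) :
      ∃ w, ReflGen c s w ∧ ReflTransGen c t w :=
    let ⟨w, hsw, htw⟩ := h
    ⟨w, .single (.inr hsw), .single (.inr htw)⟩
  have hc : ∀ u s t, c u s → c u t → ∃ w, ReflGen c s w ∧ ReflTransGen c t w := by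
    rintro u s t (hus | hus) (hut | hut)
    · exact of_join (hpeak u s t hus hut)
    · rcases reflTransGen_iff_eq_or_transGen.mp hut with rfl | hut
      · exact ⟨s, .refl, .single (.inl hus)⟩
      · obtain ⟨w, htw, hsw⟩ := join_of_transGen_of_step hsub hpeak hd hut hus
        exact of_join ⟨w, hsw, htw⟩
    · rcases reflTransGen_iff_eq_or_transGen.mp hus with rfl | hus
      · exact ⟨t, .single (.inl hut), .refl⟩
      · exact of_join (join_of_transGen_of_step hsub hpeak hd hus hut)
    · exact of_join (hd u s t hus hut)
  have hca : ReflTransGen c ≤ ReflTransGen a :=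
    reflTransGen_closed fun x y hxy => hxy.elim .single (ReflTransGen.mono hsub x y)
  have hac : ReflTransGen a ≤ ReflTransGen c := ReflTransGen.mono fun _ _ => .inl
  intro x y z hxy hxz
  obtain ⟨w, hyw, hzw⟩ := church_rosser hc (hac _ _ hxy) (hac _ _ hxz)
  exact ⟨w, hca _ _ hyw, hca _ _ hzw⟩

end Relation

/-- Critical-pair-closing systems for ARSs: if `d ⊆ a`, every local `a`-peak is
`d`-convertible, and `d` is confluent, then `a` is confluent. -/
theorem stmt_6 {α : Type*} (a d : α → α → Prop)
    (hsub : ∀ x y, d x y → a x y)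
    (hclose : ∀ u s t, a u s → a u t → Conv d s t)
    (hdconf : ∀ x y z, Relation.ReflTransGen d x y → Relation.ReflTransGen d x z →
      ∃ w, Relation.ReflTransGen d y w ∧ Relation.ReflTransGen d z w) :
    ∀ x y z, Relation.ReflTransGen a x y → Relation.ReflTransGen a x z →
      ∃ w, Relation.ReflTransGen a y w ∧ Relation.ReflTransGen a z w :=
  Relation.confluent_of_join_peaks hsub
    (fun u s t hus hut => Relation.Confluent.conv_le_join hdconf s t (hclose u s t hus hut))
    hdconf
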